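/- arXiv:0903.0258 — 2 statements merged into one kernel-verified Lean document; each statement's English description precedes it below -/
import Mathlib

section
/- Let ι be a nonempty finite type, β a type, and K = ℓ²(ι × β, ℂ). Let B be a bounded linear operator on K. Then B is localized in the first factor if and only if for all states ρ and ρ' on K with ρ|₀ = ρ'|₀, one has Tr(Bρ) = Tr(Bρ'). -/
/-!
If `B = b ⊗ 1`, then `⟨ψ, B ψ⟩ = ∑ b(u,w) ρ|₀(w,u)` for the pure state `ρ = |ψ⟩⟨ψ|`, and by
linearity `Tr(Bρ) = Tr(b ρ|₀)` for every state. Conversely, the hypothesis says (after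
normalizing) that `⟨φ, B φ⟩` depends only on the reduction of `|φ⟩⟨φ|`, which does not change
when a permutation or a phase is applied to the second factor. Comparing
`φ = e_{(u,v)} + c e_{(u',v')}` with its image under a sign flip on `v'` (when `v ≠ v'`), or under
the transposition of `v` and `v₁` (when `v' = v`), for `c = 0, 1, i`, separates the matrix
entries: `⟨e_{(u,v)}, B e_{(u',v')}⟩` vanishes for `v ≠ v'` and does not depend on `v` when `v = v'`.
-/

open scoped ComplexConjugate
open Classical

noncomputable section

variable {ι β : Type}

/-- The Hilbert space `ℓ²(ι × β, ℂ)`. -/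
abbrev K (ι β : Type) : Type := lp (fun _ : ι × β => ℂ) 2

/-- Canonical basis vector. -/
def e (u : ι) (v : β) : K ι β := lp.single 2 (u, v) 1

/-- `B` is localized in the first factor. -/
def LocalizedFst (B : K ι β →L[ℂ] K ι β) : Prop :=
  ∃ b : ι → ι → ℂ, ∀ (u u' : ι) (v v' : β),
    (inner ℂ (e u v) (B (e u' v')) : ℂ) = if v = v' then b u u' else 0

/-- A state: countable convex combination of an orthonormal family of pure states. -/
structure State (H : Type) [NormedAddCommGroup H] [InnerProductSpace ℂ H] where
  ψ : ℕ → H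
  p : ℕ → ℝ
  nonneg : ∀ k, 0 ≤ p k
  sum_one : HasSum p 1
  ortho : ∀ j k, p j ≠ 0 → p k ≠ 0 → (inner ℂ (ψ j) (ψ k) : ℂ) = if j = k then 1 else 0

/-- Reduction of a state to the first factor. -/
def red0 (ρ : State (K ι β)) : ι → ι → ℂ := fun u u' =>
  ∑' k, (ρ.p k : ℂ) * ∑' v : β, (ρ.ψ k) (u, v) * conj ((ρ.ψ k) (u', v))

/-- `Tr(Bρ)`. -/
def trB (B : K ι β →L[ℂ] K ι β) (ρ : State (K ι β)) : ℂ :=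
  ∑' k, (ρ.p k : ℂ) * (inner ℂ (ρ.ψ k) (B (ρ.ψ k)) : ℂ)

open scoped InnerProductSpace

section LpTwo

variable {α : Type*} {E : α → Type*} [∀ i, NormedAddCommGroup (E i)]

lemma lp.summable_norm_sq (f : lp E 2) : Summable fun i => ‖f i‖ ^ 2 := by
  simpa using (lp.memℓp f).summable (by norm_num : (0 : ℝ) < (2 : ENNReal).toReal)

lemma lp.tsum_norm_sq (f : lp E 2) : ∑' i, ‖f i‖ ^ 2 = ‖f‖ ^ 2 := by
  simpa using (lp.norm_rpow_eq_tsum (by norm_num : (0 : ℝ) < (2 : ENNReal).toReal) f).symm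

end LpTwo

lemma inner_add_smul_map_add_smul {E F : Type*} [NormedAddCommGroup E] [InnerProductSpace ℂ E]
    [FunLike F E E] [LinearMapClass F ℂ E E] (T : F) (x y : E) (c : ℂ) :
    ⟪x + c • y, T (x + c • y)⟫_ℂ =
      ⟪x, T x⟫_ℂ + c * ⟪x, T y⟫_ℂ + conj c * ⟪y, T x⟫_ℂ + conj c * c * ⟪y, T y⟫_ℂ := by
  simp only [map_add, map_smul, inner_add_left, inner_add_right, inner_smul_left, inner_smul_right]
  ring

def State.pure {H : Type} [NormedAddCommGroup H] [InnerProductSpace ℂ H] (φ : H) (hφ : ‖φ‖ = 1) :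
    State H where
  ψ _ := φ
  p k := if k = 0 then 1 else 0
  nonneg k := by positivity
  sum_one := hasSum_ite_eq 0 1
  ortho j k hj hk := by
    simp only [ne_eq, ite_eq_right_iff, not_forall] at hj hk
    simp [hj.1, hk.1, inner_self_eq_norm_sq_to_K, hφ]

lemma State.norm_ψ {H : Type} [NormedAddCommGroup H] [InnerProductSpace ℂ H] (ρ : State H) {k : ℕ}
    (hk : ρ.p k ≠ 0) : ‖ρ.ψ k‖ = 1 := by
  have h := ρ.ortho k k hk hk
  rw [if_pos rfl] at h
  refine (pow_eq_one_iff_of_nonneg (norm_nonneg _) two_ne_zero).1 ?_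
  rw [@norm_sq_eq_re_inner ℂ, h, RCLike.one_re]

lemma e_apply (u : ι) (v : β) (a : ι) (y : β) : e u v (a, y) = if a = u ∧ y = v then 1 else 0 := by
  simp [e, Pi.single_apply]

lemma add_smul_e_apply (u u' : ι) (v v' : β) (c : ℂ) (a : ι) (y : β) :
    (e u v + c • e u' v') (a, y) =
      (if a = u ∧ y = v then 1 else 0) + c * if a = u' ∧ y = v' then 1 else 0 := by
  rw [lp.coeFn_add, Pi.add_apply, lp.coeFn_smul, Pi.smul_apply, e_apply, e_apply, smul_eq_mul]

lemma inner_e_left (u : ι) (v : β) (f : K ι β) : ⟪e u v, f⟫_ℂ = f (u, v) := by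
  simp [e, lp.inner_single_left]

def pureRed0 (ψ : K ι β) (u u' : ι) : ℂ :=
  ∑' v : β, ψ (u, v) * conj (ψ (u', v))

lemma red0_pure (φ : K ι β) (hφ : ‖φ‖ = 1) : red0 (State.pure φ hφ) = pureRed0 φ := by
  funext u u'
  simp [red0, State.pure, pureRed0, apply_ite Complex.ofReal, ite_mul]

lemma trB_pure (B : K ι β →L[ℂ] K ι β) (φ : K ι β) (hφ : ‖φ‖ = 1) :
    trB B (State.pure φ hφ) = ⟪φ, B φ⟫_ℂ := by
  simp [trB, State.pure, apply_ite Complex.ofReal, ite_mul]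

lemma summable_slice_norm_sq (ψ : K ι β) (u : ι) : Summable fun v => ‖ψ (u, v)‖ ^ 2 :=
  (lp.summable_norm_sq ψ).comp_injective (Prod.mk_right_injective u)

lemma tsum_slice_norm_sq_le (ψ : K ι β) (u : ι) : ∑' v, ‖ψ (u, v)‖ ^ 2 ≤ ‖ψ‖ ^ 2 :=
  lp.tsum_norm_sq ψ ▸ tsum_comp_le_tsum_of_inj (lp.summable_norm_sq ψ) (fun _ => by positivity)
    (Prod.mk_right_injective u)

lemma norm_mul_norm_slice_le (ψ : K ι β) (u w : ι) (v : β) :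
    ‖ψ (u, v)‖ * ‖ψ (w, v)‖ ≤ (‖ψ (u, v)‖ ^ 2 + ‖ψ (w, v)‖ ^ 2) / 2 := by
  nlinarith [two_mul_le_add_sq ‖ψ (u, v)‖ ‖ψ (w, v)‖]

lemma summable_slice_norm_mul (ψ : K ι β) (u w : ι) :
    Summable fun v => ‖ψ (u, v)‖ * ‖ψ (w, v)‖ :=
  .of_nonneg_of_le (fun _ => by positivity) (norm_mul_norm_slice_le ψ u w)
    (((summable_slice_norm_sq ψ u).add (summable_slice_norm_sq ψ w)).div_const 2)

lemma summable_mul_conj_slice (ψ : K ι β) (u w : ι) :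
    Summable fun v => ψ (u, v) * conj (ψ (w, v)) :=
  .of_norm (by simpa using summable_slice_norm_mul ψ u w)

lemma norm_pureRed0_le (ψ : K ι β) (u w : ι) : ‖pureRed0 ψ u w‖ ≤ ‖ψ‖ ^ 2 := by
  calc ‖pureRed0 ψ u w‖ ≤ ∑' v, ‖ψ (u, v) * conj (ψ (w, v))‖ :=
        norm_tsum_le_tsum_norm (summable_mul_conj_slice ψ u w).norm
    _ = ∑' v, ‖ψ (u, v)‖ * ‖ψ (w, v)‖ := by simp
    _ ≤ ∑' v, (‖ψ (u, v)‖ ^ 2 + ‖ψ (w, v)‖ ^ 2) / 2 :=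
        (summable_slice_norm_mul ψ u w).tsum_le_tsum (norm_mul_norm_slice_le ψ u w)
          (((summable_slice_norm_sq ψ u).add (summable_slice_norm_sq ψ w)).div_const 2)
    _ = ((∑' v, ‖ψ (u, v)‖ ^ 2) + ∑' v, ‖ψ (w, v)‖ ^ 2) / 2 := by
        rw [tsum_div_const, (summable_slice_norm_sq ψ u).tsum_add (summable_slice_norm_sq ψ w)]
    _ ≤ ‖ψ‖ ^ 2 := by linarith [tsum_slice_norm_sq_le ψ u, tsum_slice_norm_sq_le ψ w]

lemma State.summable_p_mul_pureRed0 (ρ : State (K ι β)) (u w : ι) :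
    Summable fun k => (ρ.p k : ℂ) * pureRed0 (ρ.ψ k) u w := by
  refine .of_norm_bounded ρ.sum_one.summable fun k => ?_
  rcases eq_or_ne (ρ.p k) 0 with hk | hk
  · simp [hk]
  · calc ‖(ρ.p k : ℂ) * pureRed0 (ρ.ψ k) u w‖ = ρ.p k * ‖pureRed0 (ρ.ψ k) u w‖ := by
          rw [norm_mul, Complex.norm_real, Real.norm_of_nonneg (ρ.nonneg k)]
      _ ≤ ρ.p k * ‖ρ.ψ k‖ ^ 2 := by gcongr; exacts [ρ.nonneg k, norm_pureRed0_le _ u w]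
      _ = ρ.p k := by rw [ρ.norm_ψ hk]; ring

def LocalizedFstWith (B : K ι β →L[ℂ] K ι β) (b : ι → ι → ℂ) : Prop :=
  ∀ (u u' : ι) (v v' : β), ⟪e u v, B (e u' v')⟫_ℂ = if v = v' then b u u' else 0

namespace LocalizedFstWith

variable [Fintype ι] {B : K ι β →L[ℂ] K ι β} {b : ι → ι → ℂ}

lemma adjoint_e (hb : LocalizedFstWith B b) (u : ι) (v : β) :
    B.adjoint (e u v) = ∑ w, conj (b u w) • e w v := by
  ext ⟨a, y⟩
  rw [← inner_e_left, ← inner_conj_symm, ContinuousLinearMap.adjoint_inner_left, hb,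
    lp.coeFn_sum, Finset.sum_apply]
  by_cases hv : v = y
  · subst hv
    simp [e_apply]
  · simp [e_apply, hv, Ne.symm hv]

lemma map_apply (hb : LocalizedFstWith B b) (ψ : K ι β) (u : ι) (v : β) :
    B ψ (u, v) = ∑ w, b u w * ψ (w, v) := by
  rw [← inner_e_left, ← ContinuousLinearMap.adjoint_inner_left, hb.adjoint_e, sum_inner]
  simp [inner_smul_left, inner_e_left]

lemma inner_self_map (hb : LocalizedFstWith B b) (ψ : K ι β) :
    ⟪ψ, B ψ⟫_ℂ = ∑ u, ∑ w, b u w * pureRed0 ψ w u := by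
  have hsum : Summable fun x : ι × β => ⟪ψ x, B ψ x⟫_ℂ := lp.summable_inner ψ (B ψ)
  rw [lp.inner_eq_tsum, hsum.tsum_prod' fun u => hsum.comp_injective (Prod.mk_right_injective u),
    tsum_fintype]
  refine Finset.sum_congr rfl fun u _ => ?_
  calc ∑' v, ⟪ψ (u, v), B ψ (u, v)⟫_ℂ = ∑' v, ∑ w, b u w * (ψ (w, v) * conj (ψ (u, v))) := by
        congr! 2 with v
        rw [hb.map_apply, RCLike.inner_apply, Finset.sum_mul]
        exact Finset.sum_congr rfl fun w _ => by ring
    _ = ∑ w, b u w * pureRed0 ψ w u := by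
        rw [Summable.tsum_finsetSum fun w _ => (summable_mul_conj_slice ψ w u).mul_left _]
        simp_rw [tsum_mul_left, pureRed0]

lemma trB_eq (hb : LocalizedFstWith B b) (ρ : State (K ι β)) :
    trB B ρ = ∑ u, ∑ w, b u w * red0 ρ w u := by
  have hsum := ρ.summable_p_mul_pureRed0
  calc trB B ρ = ∑' k, ∑ u, ∑ w, b u w * ((ρ.p k : ℂ) * pureRed0 (ρ.ψ k) w u) := by
        simp_rw [trB, hb.inner_self_map, Finset.mul_sum]
        congr! 4
        ring
    _ = ∑ u, ∑ w, b u w * red0 ρ w u := by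
        rw [Summable.tsum_finsetSum fun u _ => summable_sum fun w _ => (hsum w u).mul_left _]
        refine Finset.sum_congr rfl fun u _ => ?_
        rw [Summable.tsum_finsetSum fun w _ => (hsum w u).mul_left _]
        simp_rw [tsum_mul_left, red0, pureRed0]

end LocalizedFstWith

lemma localizedFstWith_id [Fintype ι] :
    LocalizedFstWith (ContinuousLinearMap.id ℂ (K ι β)) fun u u' => if u = u' then 1 else 0 := by
  intro u u' v v'
  by_cases hv : v = v' <;> simp [inner_e_left, e_apply, hv]

lemma pureRed0_eq_of_apply_eq {φ φ' : K ι β} (σ : β ≃ β) (z : β → ℂ) (hz : ∀ v, ‖z v‖ = 1)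
    (h : ∀ u v, φ' (u, v) = z v * φ (u, σ v)) : pureRed0 φ' = pureRed0 φ := by
  funext u u'
  rw [pureRed0, pureRed0, ← σ.tsum_eq fun v => φ (u, v) * conj (φ (u', v))]
  refine tsum_congr fun v => ?_
  have hz' : z v * conj (z v) = 1 := by rw [RCLike.mul_conj, hz]; simp
  rw [h, h, map_mul]
  linear_combination φ (u, σ v) * conj (φ (u', σ v)) * hz'

lemma pureRed0_smul (c : ℂ) (φ : K ι β) (u u' : ι) :
    pureRed0 (c • φ) u u' = c * conj c * pureRed0 φ u u' := by
  rw [pureRed0, pureRed0, ← tsum_mul_left]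
  refine tsum_congr fun v => ?_
  simp only [lp.coeFn_smul, Pi.smul_apply, smul_eq_mul, map_mul]
  ring

lemma eq_zero_of_forall_mul_add_conj_mul_eq_zero {X Y : ℂ}
    (h : ∀ c : ℂ, c * X + conj c * Y = 0) : X = 0 := by
  have h₁ := h 1
  have h₂ := h Complex.I
  simp only [map_one, Complex.conj_I] at h₁ h₂
  linear_combination (h₁ - Complex.I * h₂ + (X - Y) * Complex.I_sq) / 2

section Converse

variable {B : K ι β →L[ℂ] K ι β}

lemma inner_self_map_eq_of_pureRed0_eq [Fintype ι]
    (hB : ∀ ρ ρ' : State (K ι β), red0 ρ = red0 ρ' → trB B ρ = trB B ρ')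
    {φ φ' : K ι β} (h : pureRed0 φ = pureRed0 φ') : ⟪φ, B φ⟫_ℂ = ⟪φ', B φ'⟫_ℂ := by
  -- The identity is localized, so `⟪φ, φ⟫` is the trace of `pureRed0 φ`.
  have hinner : ⟪φ, φ⟫_ℂ = ⟪φ', φ'⟫_ℂ := by
    have h₁ := localizedFstWith_id.inner_self_map φ
    have h₂ := localizedFstWith_id.inner_self_map φ'
    rw [h] at h₁
    simpa using h₁.trans h₂.symm
  have hnorm : ‖φ'‖ = ‖φ‖ := by
    rw [norm_eq_sqrt_re_inner (𝕜 := ℂ), ← hinner, ← norm_eq_sqrt_re_inner]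
  rcases eq_or_ne φ 0 with rfl | hφ
  · rw [norm_zero, norm_eq_zero] at hnorm
    simp [hnorm]
  have hφ' : φ' ≠ 0 := norm_ne_zero_iff.1 (hnorm ▸ norm_ne_zero_iff.2 hφ)
  have hc : (‖φ‖⁻¹ : ℂ) ≠ 0 := by simpa using hφ
  have key := hB (.pure ((‖φ‖⁻¹ : ℂ) • φ) (norm_smul_inv_norm hφ))
    (.pure ((‖φ‖⁻¹ : ℂ) • φ') (hnorm ▸ norm_smul_inv_norm hφ'))
  simp only [red0_pure, trB_pure] at key
  have := key (funext₂ fun u u' => by rw [pureRed0_smul, pureRed0_smul, h])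
  rw [map_smul, map_smul, inner_smul_left, inner_smul_left, inner_smul_right,
    inner_smul_right] at this
  exact mul_left_cancel₀ hc (mul_left_cancel₀ ((map_ne_zero _).2 hc) this)

lemma inner_e_map_e_eq_zero
    (hQ : ∀ φ φ' : K ι β, pureRed0 φ = pureRed0 φ' → ⟪φ, B φ⟫_ℂ = ⟪φ', B φ'⟫_ℂ)
    {v v' : β} (hv : v ≠ v') (u u' : ι) : ⟪e u v, B (e u' v')⟫_ℂ = 0 := by
  refine eq_zero_of_forall_mul_add_conj_mul_eq_zero (Y := ⟪e u' v', B (e u v)⟫_ℂ) fun c => ?_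
  have hflip : pureRed0 (e u v + (-c) • e u' v') = pureRed0 (e u v + c • e u' v') := by
    refine pureRed0_eq_of_apply_eq (Equiv.refl β) (fun y => if y = v' then -1 else 1)
      (fun y => by split_ifs <;> simp) fun a y => ?_
    rw [Equiv.refl_apply, add_smul_e_apply, add_smul_e_apply]
    by_cases hy : y = v' <;> simp [hy, hv.symm]
  have := hQ _ _ hflip
  rw [inner_add_smul_map_add_smul, inner_add_smul_map_add_smul, map_neg] at this
  linear_combination -this / 2

lemma inner_e_map_e_eq_of_slice
    (hQ : ∀ φ φ' : K ι β, pureRed0 φ = pureRed0 φ' → ⟪φ, B φ⟫_ℂ = ⟪φ', B φ'⟫_ℂ)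
    (u u' : ι) (v v₁ : β) : ⟪e u v, B (e u' v)⟫_ℂ = ⟪e u v₁, B (e u' v₁)⟫_ℂ := by
  have key : ∀ (a a' : ι) (c : ℂ),
      ⟪e a v + c • e a' v, B (e a v + c • e a' v)⟫_ℂ =
        ⟪e a v₁ + c • e a' v₁, B (e a v₁ + c • e a' v₁)⟫_ℂ := by
    intro a a' c
    refine hQ _ _ (pureRed0_eq_of_apply_eq (Equiv.swap v v₁) 1 (by simp) fun x y => ?_).symm
    rw [add_smul_e_apply, add_smul_e_apply, Pi.one_apply, one_mul, Equiv.swap_apply_eq_iff,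
      Equiv.swap_apply_left]
  have hdiag : ∀ a, ⟪e a v, B (e a v)⟫_ℂ = ⟪e a v₁, B (e a v₁)⟫_ℂ := fun a => by
    simpa using key a a 0
  refine sub_eq_zero.1 <| eq_zero_of_forall_mul_add_conj_mul_eq_zero
    (Y := ⟪e u' v, B (e u v)⟫_ℂ - ⟪e u' v₁, B (e u v₁)⟫_ℂ) fun c => ?_
  have := key u u' c
  rw [inner_add_smul_map_add_smul, inner_add_smul_map_add_smul] at this
  linear_combination this - hdiag u - conj c * c * hdiag u'

lemma localizedFst_of_inner_self_map_eq
    (hQ : ∀ φ φ' : K ι β, pureRed0 φ = pureRed0 φ' → ⟪φ, B φ⟫_ℂ = ⟪φ', B φ'⟫_ℂ) :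
    LocalizedFst B := by
  rcases isEmpty_or_nonempty β with _ | ⟨⟨v₀⟩⟩
  · exact ⟨0, fun _ _ v => isEmptyElim v⟩
  refine ⟨fun u u' => ⟪e u v₀, B (e u' v₀)⟫_ℂ, fun u u' v v' => ?_⟩
  split_ifs with hv
  · subst hv
    exact inner_e_map_e_eq_of_slice hQ u u' v v₀
  · exact inner_e_map_e_eq_zero hQ hv u u'

end Converse

theorem localizedFst_iff_trace_depends_on_red0_general
    {ι β : Type} [Fintype ι] (B : K ι β →L[ℂ] K ι β) :
    LocalizedFst B ↔
      ∀ ρ ρ' : State (K ι β), red0 ρ = red0 ρ' → trB B ρ = trB B ρ' := by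
  refine ⟨fun ⟨b, hb⟩ ρ ρ' h => ?_, fun hB => ?_⟩
  · rw [LocalizedFstWith.trB_eq hb, LocalizedFstWith.trB_eq hb, h]
  · exact localizedFst_of_inner_self_map_eq fun φ φ' => inner_self_map_eq_of_pureRed0_eq hB

/-- `B` is localized in the first factor iff `Tr(Bρ)` only depends on the
reduction of `ρ` to the first factor. -/
theorem localizedFst_iff_trace_depends_on_red0
    {ι β : Type} [Fintype ι] [Nonempty ι] (B : K ι β →L[ℂ] K ι β) :
    LocalizedFst B ↔
      ∀ ρ ρ' : State (K ι β), red0 ρ = red0 ρ' → trB B ρ = trB B ρ' :=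
  localizedFst_iff_trace_depends_on_red0_general B

end
end

section
/- Let F be an injective one-dimensional cellular automaton with local-rule neighbourhood 𝒩_C containing 0. Let 𝒜 and 𝒩_I be finite subsets of ℤ with 0 ∈ 𝒩_I, suppose that for all x, y ∈ C_f, if F(x) and F(y) agree outside 𝒜 then x and y agree outside 𝒜 + 𝒩_I, and set 𝒩 = 𝒩_C − 𝒩_C + 𝒩_I. For functions x, y defined on 𝒜+𝒩 let α(x,y) be the set of pairs (a,b) ∈ C_f × C_f such that a restricted to 𝒜+𝒩 equals x, b restricted to 𝒜+𝒩 equals y, and a and b agree outside 𝒜+𝒩; for functions z, t defined on 𝒜 let β(z,t) be the set of pairs (a,b) ∈ C_f × C_f such that F(a) restricted to 𝒜 equals z, F(b) restricted to 𝒜 equals t, and F(a) and F(b) agree outside 𝒜. Then whenever α(x,y) ∩ β(z,t) is nonempty, α(x,y) ⊆ β(z,t). -/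
/-! Take `(a₀, b₀) ∈ α ∩ β` and `(a, b) ∈ α`. Since `F a₀, F b₀` agree outside `𝒜`, the
configurations `a₀, b₀` agree outside `𝒜 + 𝒩I`, hence so do `a, b`. A neighbourhood `i + 𝒩C`
that meets `𝒜 + 𝒩I` lies in `𝒜 + 𝒩`, where `a, b` copy `a₀, b₀`, so `F a, F b` copy
`F a₀, F b₀` at `i`; one that misses `𝒜 + 𝒩I` sees `a` and `b` agree, so `F a i = F b i`.
As `0 ∈ 𝒩C` and `0 ∈ 𝒩I`, every `i ∈ 𝒜` is of the first kind. -/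

open scoped Pointwise
open Classical

noncomputable section

variable (A : Type) (q : A)

/-- Finite configurations over `ℤ`. -/
def Cf : Type := {c : ℤ → A // {i | c i ≠ q}.Finite}

/-- Restrictions to `S` of finite configurations. -/
def Rst (S : Set ℤ) : Type := {u : S → A // {i | u i ≠ q}.Finite}

variable {A q}

def restr (S : Set ℤ) (c : Cf A q) : Rst A q S :=
  ⟨fun i => c.1 i, c.2.preimage Subtype.val_injective.injOn⟩

theorem restr_eq_restr_iff {S : Set ℤ} {c c' : Cf A q} :
    restr S c = restr S c' ↔ ∀ i ∈ S, c.1 i = c'.1 i :=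
  ⟨fun h i hi => congrFun (congrArg Subtype.val h) ⟨i, hi⟩,
    fun h => Subtype.ext (funext fun i => h i i.2)⟩

theorem add_mem_add_sub_of_add_mem {G : Type*} [AddCommGroup G] {S N : Set G} {i n n' : G}
    (hn : n ∈ N) (hn' : n' ∈ N) (h : i + n ∈ S) : i + n' ∈ S + (N - N) :=
  ⟨i + n, h, n' - n, Set.sub_mem_sub hn' hn, add_add_sub_cancel i n' n⟩

def IsLocal (F : Cf A q → Cf A q) (N : Set ℤ) : Prop :=
  ∀ (c c' : Cf A q) (i : ℤ), (∀ n ∈ N, c.1 (i + n) = c'.1 (i + n)) → (F c).1 i = (F c').1 i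

theorem isLocal_of_localRule {F : Cf A q → Cf A q} {N : Set ℤ} {f : (N → A) → A}
    (hrule : ∀ c i, (F c).1 i = f (fun n => c.1 (i + (n : ℤ)))) : IsLocal F N := by
  intro c c' i h
  rw [hrule, hrule]
  exact congrArg f (funext fun n => h n n.2)

namespace IsLocal

variable {F : Cf A q → Cf A q} {N S : Set ℤ}

/-- Once the neighbourhood `i + N` meets `S`, it lies inside `S + (N - N)`. -/
theorem apply_eq_of_eqOn_add_sub (hF : IsLocal F N) {c c' : Cf A q}
    (h : ∀ j ∈ S + (N - N), c.1 j = c'.1 j) {i n : ℤ} (hn : n ∈ N) (hi : i + n ∈ S) :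
    (F c).1 i = (F c').1 i :=
  hF c c' i fun _ hn' => h _ (add_mem_add_sub_of_add_mem hn hn' hi)

/-- Either `i + N` meets `S`, and then `F` reads `a, b` only where they copy `a₀, b₀`,
or it misses `S`, and then `F` reads `a, b` only where they agree. -/
theorem apply_eq_apply_of_eqOn_add_sub (hF : IsLocal F N) {a b a₀ b₀ : Cf A q}
    (ha : ∀ j ∈ S + (N - N), a.1 j = a₀.1 j) (hb : ∀ j ∈ S + (N - N), b.1 j = b₀.1 j)
    (hab : ∀ j ∉ S + (N - N), a.1 j = b.1 j) (hab₀ : ∀ j ∉ S, a₀.1 j = b₀.1 j) {i : ℤ}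
    (hi : (F a₀).1 i = (F b₀).1 i) : (F a).1 i = (F b).1 i := by
  by_cases hmeet : ∃ n ∈ N, i + n ∈ S
  · obtain ⟨n, hn, hin⟩ := hmeet
    rw [hF.apply_eq_of_eqOn_add_sub ha hn hin, hF.apply_eq_of_eqOn_add_sub hb hn hin, hi]
  · push Not at hmeet
    refine hF a b i fun n hn => ?_
    by_cases hj : i + n ∈ S + (N - N)
    · rw [ha _ hj, hb _ hj, hab₀ _ (hmeet n hn)]
    · exact hab _ hj

end IsLocal

theorem alpha_inter_beta_nonempty_subset_general
    {A : Type} {q : A}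
    (F : Cf A q → Cf A q)
    (𝒩C : Set ℤ) (h0C : (0 : ℤ) ∈ 𝒩C) (f : (𝒩C → A) → A)
    (hrule : ∀ c i, (F c).1 i = f (fun n => c.1 (i + (n : ℤ))))
    (𝒜 𝒩I : Set ℤ) (h0I : (0 : ℤ) ∈ 𝒩I)
    (hinv : ∀ x y : Cf A q, (∀ i ∉ 𝒜, (F x).1 i = (F y).1 i) →
      ∀ i ∉ 𝒜 + 𝒩I, x.1 i = y.1 i)
    (𝒩 : Set ℤ) (h𝒩 : 𝒩 = 𝒩C - 𝒩C + 𝒩I)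
    (x y : Rst A q (𝒜 + 𝒩)) (z t : Rst A q 𝒜) :
    ({ab : Cf A q × Cf A q | restr (𝒜 + 𝒩) ab.1 = x ∧ restr (𝒜 + 𝒩) ab.2 = y ∧
        ∀ i ∉ 𝒜 + 𝒩, ab.1.1 i = ab.2.1 i} ∩
      {ab : Cf A q × Cf A q | restr 𝒜 (F ab.1) = z ∧ restr 𝒜 (F ab.2) = t ∧
        ∀ i ∉ 𝒜, (F ab.1).1 i = (F ab.2).1 i}).Nonempty →
    {ab : Cf A q × Cf A q | restr (𝒜 + 𝒩) ab.1 = x ∧ restr (𝒜 + 𝒩) ab.2 = y ∧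
        ∀ i ∉ 𝒜 + 𝒩, ab.1.1 i = ab.2.1 i} ⊆
      {ab : Cf A q × Cf A q | restr 𝒜 (F ab.1) = z ∧ restr 𝒜 (F ab.2) = t ∧
        ∀ i ∉ 𝒜, (F ab.1).1 i = (F ab.2).1 i} := by
  rintro ⟨⟨a₀, b₀⟩, ⟨hx₀, hy₀, -⟩, hz₀, ht₀, hF₀⟩ ⟨a, b⟩ ⟨hx, hy, hout⟩
  have hF : IsLocal F 𝒩C := isLocal_of_localRule hrule
  have hwin : 𝒜 + 𝒩 = 𝒜 + 𝒩I + (𝒩C - 𝒩C) := by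
    rw [h𝒩, add_comm (𝒩C - 𝒩C), add_assoc]
  have ha := restr_eq_restr_iff.1 (hx.trans hx₀.symm)
  have hb := restr_eq_restr_iff.1 (hy.trans hy₀.symm)
  rw [hwin] at ha hb hout
  have hmeet : ∀ i ∈ 𝒜, i + 0 ∈ 𝒜 + 𝒩I := fun i hi => ⟨i, hi, 0, h0I, rfl⟩
  refine ⟨?_, ?_, fun i hi => ?_⟩
  · rw [← hz₀]
    exact restr_eq_restr_iff.2 fun i hi => hF.apply_eq_of_eqOn_add_sub ha h0C (hmeet i hi)
  · rw [← ht₀]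
    exact restr_eq_restr_iff.2 fun i hi => hF.apply_eq_of_eqOn_add_sub hb h0C (hmeet i hi)
  · exact hF.apply_eq_apply_of_eqOn_add_sub ha hb hout (hinv a₀ b₀ hF₀) (hF₀ i hi)

/-- with `𝒩 = 𝒩C - 𝒩C + 𝒩I`, whenever the set `α(x,y)` of pairs of finite
configurations restricting to `(x, y)` on `𝒜 + 𝒩` and agreeing outside `𝒜 + 𝒩` meets the
set `β(z,t)` of pairs whose images under `F` restrict to `(z, t)` on `𝒜` and agree outside
`𝒜`, the former is included in the latter. -/
theorem alpha_inter_beta_nonempty_subset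
    {A : Type} [Fintype A] {q : A}
    (F : Cf A q → Cf A q)
    (𝒩C : Set ℤ) (h𝒩C : 𝒩C.Finite) (h0C : (0 : ℤ) ∈ 𝒩C) (f : (𝒩C → A) → A)
    (hq : f (fun _ => q) = q)
    (hrule : ∀ c i, (F c).1 i = f (fun n => c.1 (i + (n : ℤ))))
    (hinj : Function.Injective F)
    (𝒜 𝒩I : Set ℤ) (h𝒜 : 𝒜.Finite) (h𝒩I : 𝒩I.Finite) (h0I : (0 : ℤ) ∈ 𝒩I)
    (hinv : ∀ x y : Cf A q, (∀ i ∉ 𝒜, (F x).1 i = (F y).1 i) →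
      ∀ i ∉ 𝒜 + 𝒩I, x.1 i = y.1 i)
    (𝒩 : Set ℤ) (h𝒩 : 𝒩 = 𝒩C - 𝒩C + 𝒩I)
    (x y : Rst A q (𝒜 + 𝒩)) (z t : Rst A q 𝒜) :
    ({ab : Cf A q × Cf A q | restr (𝒜 + 𝒩) ab.1 = x ∧ restr (𝒜 + 𝒩) ab.2 = y ∧
        ∀ i ∉ 𝒜 + 𝒩, ab.1.1 i = ab.2.1 i} ∩
      {ab : Cf A q × Cf A q | restr 𝒜 (F ab.1) = z ∧ restr 𝒜 (F ab.2) = t ∧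
        ∀ i ∉ 𝒜, (F ab.1).1 i = (F ab.2).1 i}).Nonempty →
    {ab : Cf A q × Cf A q | restr (𝒜 + 𝒩) ab.1 = x ∧ restr (𝒜 + 𝒩) ab.2 = y ∧
        ∀ i ∉ 𝒜 + 𝒩, ab.1.1 i = ab.2.1 i} ⊆
      {ab : Cf A q × Cf A q | restr 𝒜 (F ab.1) = z ∧ restr 𝒜 (F ab.2) = t ∧
        ∀ i ∉ 𝒜, (F ab.1).1 i = (F ab.2).1 i} :=
  alpha_inter_beta_nonempty_subset_general F 𝒩C h0C f hrule 𝒜 𝒩I h0I hinv 𝒩 h𝒩 x y z t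

end
end
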